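/- Let (x_i)_{i∈ℤ} be an arbitrary sequence of nonzero elements (in a field) satisfying x_{i+1} x_{i-1} = x_i^2 - 1. Fix k ≥ 1, ℓ ≥ 0, n ∈ ℤ_{≥0}^k, and define, for m ∈ ℤ_{≥0}^k, q_i(m) = ℓ + ∑_{j=i+1}^k (j-i)(2m_j - n_j). Then (as an identity of formal sums, assuming absolute convergence, e.g., x_i real with x_i > 1 suitably) the generating function Z^{(k)}_{ℓ,n}(x_0,x_1) = ∑_{m∈ℤ_{≥0}^k} x_1^{-q_0(m)} x_0^{q_1(m)} ∏_{i=1}^k C(m_i + q_i(m), m_i) satisfies the factorization Z^{(k)}_{ℓ,n}(x_0,x_1) = (x_1 x_k^{ℓ+1})/(x_0 x_{k+1}^{ℓ+1}) · ∏_{i=1}^k x_i^{n_i}. -/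

import Mathlib

open Finset

/-- Generalized binomial coefficient `C(m+q, m) = (q+1)(q+2)⋯(q+m)/m!`, defined for any
integer `q` (possibly negative) and `m ∈ ℕ`. -/
noncomputable def genBinom (q : ℤ) (m : ℕ) : ℝ :=
  (∏ j ∈ Finset.range m, ((q : ℝ) + (j : ℝ) + 1)) / (m.factorial : ℝ)

/-- `q_i(m) = ℓ + ∑_{j=i+1}^k (j-i)(2 m_j - n_j)`, where the `j`-th variable (j = 1,…,k)
is indexed by `Fin k` via `j = (j' : Fin k) + 1`. -/
def qvac (k ℓ : ℕ) (n : ℕ → ℕ) (m : Fin k → ℕ) (i : ℕ) : ℤ :=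
  (ℓ : ℤ) + ∑ j : Fin k,
    (if i ≤ (j : ℕ) then (((j : ℕ) : ℤ) + 1 - (i : ℤ)) * (2 * (m j : ℤ) - (n ((j : ℕ) + 1) : ℤ))
     else 0)

/-- The summand of the sl₂ generating function `Z^{(k)}_{ℓ,n}(x₀,x₁)`. -/
noncomputable def Zsummand (x0 x1 : ℝ) (k ℓ : ℕ) (n : ℕ → ℕ) (m : Fin k → ℕ) : ℝ :=
  x1 ^ (-(qvac k ℓ n m 0)) * x0 ^ (qvac k ℓ n m 1) *
    ∏ j : Fin k, genBinom (qvac k ℓ n m ((j : ℕ) + 1)) (m j)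

/-- The sl₂ generating function `Z^{(k)}_{ℓ,n}(x₀,x₁)
  = ∑_{m ∈ ℤ_{≥0}^k} x₁^{-q₀(m)} x₀^{q₁(m)} ∏_{i=1}^k C(m_i + q_i(m), m_i)`. -/
noncomputable def Zfun (x0 x1 : ℝ) (k ℓ : ℕ) (n : ℕ → ℕ) : ℝ :=
  ∑' m : Fin k → ℕ, Zsummand x0 x1 k ℓ n m

/-!
Induction on `k`. Splitting `m = (m₁, m')`, one has `q_{i+1}(m₁, m') = q'_i(m')` for the data
shifted by one (`n'_j = n_{j+1}`) and `q_0 = 2 q_1 - q_2 + 2 m₁ - n₁`, so the sum over `m₁` alone is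
the generalized binomial series `∑ C(m₁ + q, m₁) z^{m₁} = (1 - z)^{-(q+1)}` at `z = x₁⁻²`. The
Q-system turns `1 - x₁⁻²` into `x₀ x₂ / x₁²`, and what is left is `x₁^{n₁+2} / (x₀ x₂)` times
`Z^{(k-1)}_{ℓ,n'}(x₁, x₂)` for the sequence `i ↦ x_{i+1}`, which again solves the Q-system.
-/

lemma genBinom_natCast (p m : ℕ) : genBinom p m = (m + p).choose p := by
  have h := congrArg (Nat.cast (R := ℝ)) (Nat.ascFactorial_eq_factorial_mul_choose p m)
  rw [Nat.ascFactorial_eq_prod_range] at h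
  push_cast at h
  rw [genBinom, div_eq_iff (by positivity), add_comm m p, Nat.choose_symm_add]
  simpa [add_right_comm, add_assoc, mul_comm] using h

lemma genBinom_neg_sub_one (p m : ℕ) : genBinom (-p - 1) m = (-1) ^ m * p.choose m := by
  rcases lt_or_ge p m with hpm | hmp
  · rw [Nat.choose_eq_zero_of_lt hpm, genBinom,
      prod_eq_zero (mem_range.mpr hpm) (by push_cast; ring)]
    simp
  · have h := congrArg (Nat.cast (R := ℝ)) (Nat.descFactorial_eq_factorial_mul_choose p m)
    rw [Nat.descFactorial_eq_prod_range] at h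
    have hprod : ∏ j ∈ range m, (((-p - 1 : ℤ) : ℝ) + j + 1)
        = ∏ j ∈ range m, (-1 : ℝ) * ((p - j : ℕ) : ℝ) :=
      prod_congr rfl fun j hj => by
        rw [Nat.cast_sub (by have := mem_range.mp hj; omega)]
        push_cast
        ring
    rw [genBinom, hprod, prod_mul_distrib, prod_const, card_range, ← Nat.cast_prod, h]
    push_cast
    field_simp

lemma one_le_genBinom_natCast (p m : ℕ) : 1 ≤ genBinom p m := by
  rw [genBinom_natCast]
  exact_mod_cast Nat.choose_pos (Nat.le_add_left p m)

lemma hasSum_genBinom_mul_pow {q : ℤ} {z : ℝ} (hs : Summable fun m : ℕ => genBinom q m * z ^ m) :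
    HasSum (fun m : ℕ => genBinom q m * z ^ m) ((1 - z) ^ (-(q + 1))) := by
  obtain ⟨p, rfl⟩ | ⟨p, rfl⟩ : (∃ p : ℕ, q = p) ∨ ∃ p : ℕ, q = -p - 1 := by
    rcases q with p | p
    exacts [.inl ⟨p, rfl⟩, .inr ⟨p, by rw [Int.negSucc_eq]; ring⟩]
  · -- the coefficients are at least `1`, so summability forces `‖z‖ < 1`
    have hz : ‖z‖ < 1 := by
      by_contra! hz
      have h := ge_of_tendsto' hs.tendsto_atTop_zero.norm fun m => by
        rw [norm_mul, norm_pow, Real.norm_of_nonneg (by linarith [one_le_genBinom_natCast p m])]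
        exact one_le_mul_of_one_le_of_one_le (one_le_genBinom_natCast p m) (one_le_pow₀ hz)
      norm_num at h
    have h := hasSum_choose_mul_geometric_of_norm_lt_one p hz
    rw [zpow_neg, ← Nat.cast_succ, zpow_natCast, ← one_div]
    simpa only [genBinom_natCast] using h
  · have hval : (1 - z) ^ (-(-(p : ℤ) - 1 + 1))
        = ∑ m ∈ range (p + 1), genBinom (-p - 1) m * z ^ m := by
      rw [show -(-(p : ℤ) - 1 + 1) = p by ring, zpow_natCast, show 1 - z = -z + 1 by ring, add_pow]
      refine sum_congr rfl fun m _ => ?_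
      rw [genBinom_neg_sub_one, neg_pow]
      ring
    rw [hval]
    refine hasSum_sum_of_ne_finset_zero fun m hm => ?_
    rw [genBinom_neg_sub_one, Nat.choose_eq_zero_of_lt (by simpa using hm)]
    simp

lemma qvac_cons_succ (k ℓ : ℕ) (n : ℕ → ℕ) (m₀ : ℕ) (b : Fin k → ℕ) (i : ℕ) :
    qvac (k + 1) ℓ n (Fin.cons m₀ b) (i + 1) = qvac k ℓ (fun j => n (j + 1)) b i := by
  simp only [qvac, Fin.sum_univ_succ, Fin.cons_zero, Fin.cons_succ, Fin.val_zero, Fin.val_succ]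
  rw [if_neg (by omega), zero_add]
  congr 1
  refine sum_congr rfl fun j _ => ?_
  by_cases h : i ≤ (j : ℕ)
  · rw [if_pos (by omega), if_pos h]
    push_cast
    ring
  · rw [if_neg (by omega), if_neg h]

lemma qvac_cons_zero (k ℓ : ℕ) (n : ℕ → ℕ) (m₀ : ℕ) (b : Fin k → ℕ) :
    qvac (k + 1) ℓ n (Fin.cons m₀ b) 0
      = 2 * qvac k ℓ (fun j => n (j + 1)) b 0 - qvac k ℓ (fun j => n (j + 1)) b 1
        + 2 * m₀ - n 1 := by
  have hq₁ : ∀ j : Fin k, (if 1 ≤ (j : ℕ) then (((j : ℕ) : ℤ) + 1 - ((1 : ℕ) : ℤ)) *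
        (2 * (b j : ℤ) - n ((j : ℕ) + 1 + 1)) else 0)
      = (j : ℕ) * (2 * (b j : ℤ) - n ((j : ℕ) + 1 + 1)) := by
    intro j
    split_ifs with h
    · push_cast; ring
    · simp [show (j : ℕ) = 0 by omega]
  simp only [qvac, Fin.sum_univ_succ, Fin.cons_zero, Fin.cons_succ, Fin.val_zero, Fin.val_succ,
    Nat.zero_le, if_true, hq₁]
  rw [mul_add, mul_sum]
  push_cast
  have hsum : ∑ j : Fin k, (((j : ℕ) : ℤ) + 1 + 1 - 0) * (2 * (b j : ℤ) - n ((j : ℕ) + 1 + 1))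
      = ∑ j : Fin k, 2 * ((((j : ℕ) : ℤ) + 1 - 0) * (2 * (b j : ℤ) - n ((j : ℕ) + 1 + 1)))
        - ∑ j : Fin k, ((j : ℕ) : ℤ) * (2 * (b j : ℤ) - n ((j : ℕ) + 1 + 1)) := by
    rw [← sum_sub_distrib]
    exact sum_congr rfl fun j _ => by ring
  rw [hsum]
  ring

lemma Zsummand_cons {x₀ x₁ x₂ : ℝ} (h₁ : x₁ ≠ 0) (h₂ : x₂ ≠ 0) (k ℓ : ℕ) (n : ℕ → ℕ) (m₀ : ℕ)
    (b : Fin k → ℕ) :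
    Zsummand x₀ x₁ (k + 1) ℓ n (Fin.cons m₀ b)
      = x₁ ^ n 1 * (x₀ * x₂ / x₁ ^ 2) ^ qvac k ℓ (fun j => n (j + 1)) b 0
          * Zsummand x₁ x₂ k ℓ (fun j => n (j + 1)) b
          * (genBinom (qvac k ℓ (fun j => n (j + 1)) b 0) m₀ * ((x₁ ^ 2)⁻¹) ^ m₀) := by
  have hprod : ∏ j : Fin (k + 1), genBinom (qvac (k + 1) ℓ n (Fin.cons m₀ b) (j + 1))
        ((Fin.cons m₀ b : Fin (k + 1) → ℕ) j)
      = genBinom (qvac k ℓ (fun j => n (j + 1)) b 0) m₀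
        * ∏ j : Fin k, genBinom (qvac k ℓ (fun j => n (j + 1)) b (j + 1)) (b j) := by
    simp only [Fin.prod_univ_succ, Fin.cons_zero, Fin.cons_succ, Fin.val_zero, Fin.val_succ,
      qvac_cons_succ]
  rw [Zsummand, Zsummand, hprod, qvac_cons_zero, qvac_cons_succ]
  set Q₀ := qvac k ℓ (fun j => n (j + 1)) b 0
  set Q₁ := qvac k ℓ (fun j => n (j + 1)) b 1
  rw [show -(2 * Q₀ - Q₁ + 2 * m₀ - n 1) = n 1 + Q₁ - 2 * Q₀ - 2 * m₀ by ring,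
    zpow_sub₀ h₁, zpow_sub₀ h₁, zpow_add₀ h₁, zpow_mul, zpow_mul, div_zpow, mul_zpow, zpow_neg,
    zpow_natCast, zpow_natCast, inv_pow]
  have hx₂Q₀ : x₂ ^ Q₀ ≠ 0 := zpow_ne_zero _ h₂
  field_simp

lemma hasSum_Zsummand_cons {x₀ x₁ x₂ : ℝ} (h₀ : x₀ ≠ 0) (h₁ : x₁ ≠ 0) (h₂ : x₂ ≠ 0)
    (hQ : x₂ * x₀ = x₁ ^ 2 - 1) (k ℓ : ℕ) (n : ℕ → ℕ) (b : Fin k → ℕ)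
    (hs : Summable fun m₀ : ℕ => Zsummand x₀ x₁ (k + 1) ℓ n (Fin.cons m₀ b)) :
    HasSum (fun m₀ : ℕ => Zsummand x₀ x₁ (k + 1) ℓ n (Fin.cons m₀ b))
      (x₁ ^ (n 1 + 2) / (x₀ * x₂) * Zsummand x₁ x₂ k ℓ (fun j => n (j + 1)) b) := by
  simp only [Zsummand_cons h₁ h₂] at hs ⊢
  set Q := qvac k ℓ (fun j => n (j + 1)) b 0
  set w := x₀ * x₂ / x₁ ^ 2
  have hw : w ≠ 0 := by positivity
  by_cases hc : x₁ ^ n 1 * w ^ Q * Zsummand x₁ x₂ k ℓ (fun j => n (j + 1)) b = 0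
  · have hZ : Zsummand x₁ x₂ k ℓ (fun j => n (j + 1)) b = 0 := by
      simpa [h₁, zpow_ne_zero Q hw] using hc
    simp [hZ, hasSum_zero]
  · have hw' : 1 - (x₁ ^ 2)⁻¹ = w := by
      simp only [w]
      field_simp
      linear_combination -hQ
    have hval : x₁ ^ (n 1 + 2) / (x₀ * x₂) * Zsummand x₁ x₂ k ℓ (fun j => n (j + 1)) b
        = x₁ ^ n 1 * w ^ Q * Zsummand x₁ x₂ k ℓ (fun j => n (j + 1)) b * w ^ (-(Q + 1)) := by
      have hwQ : w ^ Q ≠ 0 := zpow_ne_zero Q hw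
      rw [zpow_neg, zpow_add_one₀ hw]
      simp only [w] at hwQ ⊢
      field_simp
      ring
    rw [hval, ← hw']
    exact (hasSum_genBinom_mul_pow ((summable_mul_left_iff hc).mp hs)).mul_left _

lemma hasSum_Zsummand_shift {x₀ x₁ x₂ : ℝ} (h₀ : x₀ ≠ 0) (h₁ : x₁ ≠ 0) (h₂ : x₂ ≠ 0)
    (hQ : x₂ * x₀ = x₁ ^ 2 - 1) (k ℓ : ℕ) (n : ℕ → ℕ)
    (hs : Summable (Zsummand x₀ x₁ (k + 1) ℓ n)) :
    HasSum (fun b => x₁ ^ (n 1 + 2) / (x₀ * x₂) * Zsummand x₁ x₂ k ℓ (fun j => n (j + 1)) b)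
      (Zfun x₀ x₁ (k + 1) ℓ n) := by
  have h : HasSum (fun p : (Fin k → ℕ) × ℕ => Zsummand x₀ x₁ (k + 1) ℓ n (Fin.cons p.2 p.1))
      (Zfun x₀ x₁ (k + 1) ℓ n) :=
    ((Equiv.prodComm _ _).trans (Fin.consEquiv fun _ => ℕ)).hasSum_iff
      (f := Zsummand x₀ x₁ (k + 1) ℓ n) |>.mpr hs.hasSum
  refine h.prod_fiberwise fun b => ?_
  exact hasSum_Zsummand_cons h₀ h₁ h₂ hQ k ℓ n b (h.summable.prod_factor b)

lemma Zfun_zero (x₀ x₁ : ℝ) (ℓ : ℕ) (n : ℕ → ℕ) : Zfun x₀ x₁ 0 ℓ n = (x₀ / x₁) ^ ℓ := by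
  simp [Zfun, Zsummand, qvac, div_eq_mul_inv, mul_pow, mul_comm]

lemma prod_Icc_one_succ {M : Type*} [CommMonoid M] (f : ℕ → M) (k : ℕ) :
    ∏ i ∈ Icc 1 (k + 1), f i = f 1 * ∏ i ∈ Icc 1 k, f (i + 1) := by
  rw [← insert_Icc_add_one_left_eq_Icc (by omega), prod_insert (by simp),
    ← map_add_right_Icc 1 k 1, prod_map]
  rfl

theorem Zfun_factorization_general (x : ℤ → ℝ) (hne : ∀ i, x i ≠ 0)
    (hQ : ∀ i : ℤ, x (i + 1) * x (i - 1) = x i ^ 2 - 1)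
    (k : ℕ) (ℓ : ℕ) (n : ℕ → ℕ)
    (hsum : Summable (Zsummand (x 0) (x 1) k ℓ n)) :
    Zfun (x 0) (x 1) k ℓ n
      = (x 1 * x k ^ (ℓ + 1)) / (x 0 * x (k + 1) ^ (ℓ + 1)) *
        ∏ i ∈ Finset.Icc 1 k, x (i : ℤ) ^ n i := by
  induction k generalizing x n with
  | zero =>
    have h₀ := hne 0
    have h₁ := hne 1
    rw [Zfun_zero, div_pow, Icc_eq_empty (by omega), prod_empty]
    push_cast
    field_simp
    ring
  | succ k ih =>
    have h₀ := hne 0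
    have h₁ := hne 1
    have h₂ := hne 2
    have hshift := hasSum_Zsummand_shift h₀ h₁ h₂ (by simpa using hQ 1) k ℓ n hsum
    have hC : x 1 ^ (n 1 + 2) / (x 0 * x 2) ≠ 0 := by positivity
    have ih' := ih (fun i => x (i + 1)) (fun i => hne _)
      (fun i => by simpa [add_assoc] using hQ (i + 1)) (fun j => n (j + 1))
      (by simpa using (summable_mul_left_iff hC).mp hshift.summable)
    simp only [zero_add, one_add_one_eq_two] at ih'
    rw [← hshift.tsum_eq, tsum_mul_left, ← Zfun, ih', prod_Icc_one_succ]
    push_cast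
    field_simp
    ring

/-- Factorization of the sl₂ generating function: if `(x_i)_{i∈ℤ}` is a sequence of nonzero
reals satisfying the A₁ Q-system `x_{i+1} x_{i-1} = x_i² - 1`, then
`Z^{(k)}_{ℓ,n}(x₀,x₁) = (x₁ x_k^{ℓ+1})/(x₀ x_{k+1}^{ℓ+1}) ∏_{i=1}^k x_i^{n_i}`. -/
theorem Zfun_factorization (x : ℤ → ℝ) (hne : ∀ i, x i ≠ 0)
    (hQ : ∀ i : ℤ, x (i + 1) * x (i - 1) = x i ^ 2 - 1)
    (k : ℕ) (hk : 1 ≤ k) (ℓ : ℕ) (n : ℕ → ℕ)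
    (hsum : Summable (Zsummand (x 0) (x 1) k ℓ n)) :
    Zfun (x 0) (x 1) k ℓ n
      = (x 1 * x k ^ (ℓ + 1)) / (x 0 * x (k + 1) ^ (ℓ + 1)) *
        ∏ i ∈ Finset.Icc 1 k, x (i : ℤ) ^ n i :=
  Zfun_factorization_general x hne hQ k ℓ n hsum
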